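/- arXiv:2202.06617 — 3 statements merged into one kernel-verified Lean document; each statement's English description precedes it below -/
import Mathlib

section
/- In the full-information Bernoulli experts setting with finite action set A containing an action a* with p_{a*} = 1, the regret of Follow-The-Leader satisfies R_T(FTL) ≤ 1 + |{a ∈ A : p_a ∈ (0,1)}| for every horizon T, uniformly in T. -/
/-!
Almost surely, arms with `p a = 1` always pay `1` and arms with `p a = 0` always pay `0`. On such
a path `astar` has `t` successes in the first `t` rounds, so the leader at round `t` has succeeded
in every earlier round; an arm that fails when played is therefore never played again. A failure
at a round `t > 0` is by an arm that succeeded at round `0`, hence with `0 < p a < 1`: apart from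
round `0`, failing rounds inject into `{a | 0 < p a < 1}`.
-/

open MeasureTheory ProbabilityTheory Finset

theorem Finset.eq_one_of_card_le_sum {ι : Type*} {s : Finset ι} {f : ι → ℝ}
    (hf : ∀ i ∈ s, f i ≤ 1) (hsum : (#s : ℝ) ≤ ∑ i ∈ s, f i) {i : ι} (hi : i ∈ s) :
    f i = 1 := by
  have hsum_eq : ∑ i ∈ s, f i = ∑ _i ∈ s, (1 : ℝ) :=
    le_antisymm (sum_le_sum hf) (by simpa using hsum)
  exact (sum_eq_sum_iff_of_le hf).1 hsum_eq i hi

theorem Finset.card_sub_sum_eq_card_filter_eq_zero {ι : Type*} (s : Finset ι) {f : ι → ℝ}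
    (hf : ∀ i, f i = 0 ∨ f i = 1) :
    (#s : ℝ) - ∑ i ∈ s, f i = #{i ∈ s | f i = 0} := by
  rw [← sum_boole, ← nsmul_one, ← sum_const, ← sum_sub_distrib]
  refine sum_congr rfl fun i _ => ?_
  rcases hf i with h | h <;> simp [h]

section FollowTheLeader

variable {A : Type*} {b : ℕ → A → ℝ} {act : ℕ → A} {astar : A}

theorem leader_eq_one_of_lt (hval : ∀ t a, b t a = 0 ∨ b t a = 1) (hstar : ∀ t, b t astar = 1)
    {t : ℕ} (hlead : ∑ s ∈ range t, b s astar ≤ ∑ s ∈ range t, b s (act t)) {s : ℕ}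
    (hs : s < t) : b s (act t) = 1 := by
  refine eq_one_of_card_le_sum (f := fun u => b u (act t)) (fun u _ => ?_) ?_ (mem_range.2 hs)
  · rcases hval u (act t) with h | h <;> simp [h]
  · simpa [hstar] using hlead

theorem injOn_leader_setOf_eq_zero (hval : ∀ t a, b t a = 0 ∨ b t a = 1)
    (hstar : ∀ t, b t astar = 1)
    (hlead : ∀ t, ∑ s ∈ range t, b s astar ≤ ∑ s ∈ range t, b s (act t)) :
    Set.InjOn act {t | b t (act t) = 0} := by
  have key {t t'} (ht : b t (act t) = 0) (hlt : t < t') : act t ≠ act t' := fun heq => by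
    have h1 := leader_eq_one_of_lt hval hstar (hlead t') hlt
    rw [← heq, ht] at h1
    exact zero_ne_one h1
  intro t ht t' ht' heq
  by_contra hne
  rcases lt_or_gt_of_ne hne with hlt | hlt
  · exact key ht hlt heq
  · exact key ht' hlt heq.symm

theorem card_filter_leader_eq_zero_le (hval : ∀ t a, b t a = 0 ∨ b t a = 1)
    (hstar : ∀ t, b t astar = 1)
    (hlead : ∀ t, ∑ s ∈ range t, b s astar ≤ ∑ s ∈ range t, b s (act t))
    (S : Finset A) (hS : ∀ a ∉ S, (∀ t, b t a = 0) ∨ (∀ t, b t a = 1)) (T : ℕ) :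
    #{t ∈ range T | b t (act t) = 0} ≤ 1 + #S := by
  set F := {t ∈ range T | b t (act t) = 0}
  have hmaps : Set.MapsTo act (F.erase 0 : Set ℕ) S := by
    intro t ht
    simp only [F, coe_erase, coe_filter, Set.mem_sdiff, Set.mem_ofPred_eq,
      Set.mem_singleton_iff] at ht
    obtain ⟨⟨-, hfail⟩, ht0⟩ := ht
    by_contra hnot
    rcases hS _ hnot with h | h
    · have := leader_eq_one_of_lt hval hstar (hlead t) (Nat.pos_of_ne_zero ht0)
      simp [h] at this
    · simp [h] at hfail
  have hinj : Set.InjOn act (F.erase 0 : Set ℕ) :=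
    (injOn_leader_setOf_eq_zero hval hstar hlead).mono fun _ ht =>
      (mem_filter.1 (mem_of_mem_erase ht)).2
  have := card_le_card_of_injOn act hmaps hinj
  have := pred_card_le_card_erase (s := F) (a := 0)
  omega

theorem card_sub_sum_leader_le (hval : ∀ t a, b t a = 0 ∨ b t a = 1)
    (hstar : ∀ t, b t astar = 1)
    (hlead : ∀ t, ∑ s ∈ range t, b s astar ≤ ∑ s ∈ range t, b s (act t))
    (S : Finset A) (hS : ∀ a ∉ S, (∀ t, b t a = 0) ∨ (∀ t, b t a = 1)) (T : ℕ) :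
    (T : ℝ) - ∑ t ∈ range T, b t (act t) ≤ 1 + #S := by
  have hcount := card_sub_sum_eq_card_filter_eq_zero (range T) (f := fun t => b t (act t))
    fun t => hval t _
  rw [card_range] at hcount
  rw [hcount]
  exact_mod_cast card_filter_leader_eq_zero_le hval hstar hlead S hS T

end FollowTheLeader

section Probability

variable {Ω : Type*} [MeasurableSpace Ω] {μ : Measure Ω} {ι : Type*} [Countable ι]
  {X : ι → Ω → ℝ}

theorem ae_forall_eq_one_of_measure_eq_one [IsProbabilityMeasure μ] (hX : ∀ i, Measurable (X i))
    (h : ∀ i, μ {ω | X i ω = 1} = 1) : ∀ᵐ ω ∂μ, ∀ i, X i ω = 1 :=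
  ae_all_iff.2 fun i =>
    (ae_iff_measure_eq (p := fun ω => X i ω = 1)
      (hX i (measurableSet_singleton 1)).nullMeasurableSet).2
      (by rw [h i, measure_univ])

theorem ae_forall_eq_zero_of_measure_eq_one_eq_zero (hval : ∀ i ω, X i ω = 0 ∨ X i ω = 1)
    (h : ∀ i, μ {ω | X i ω = 1} = 0) : ∀ᵐ ω ∂μ, ∀ i, X i ω = 0 :=
  ae_all_iff.2 fun i =>
    (measure_eq_zero_iff_ae_notMem.1 (h i)).mono fun ω hω => (hval i ω).resolve_right hω

theorem Measurable.eval_of_countable {A : Type*} [Countable A] [MeasurableSpace A]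
    [MeasurableSingletonClass A] {Y : A → Ω → ℝ} (hY : ∀ a, Measurable (Y a)) {α : Ω → A}
    (hα : Measurable α) : Measurable fun ω => Y (α ω) ω :=
  (measurable_from_prod_countable_right (f := fun q : A × Ω => Y q.1 q.2) hY).comp
    (hα.prodMk measurable_id)

theorem ae_forall_eq_of_bernoulli_zero_or_one [IsProbabilityMeasure μ] {A : Type*} [Countable A]
    {B : ℕ → A → Ω → ℝ} {p : A → ℝ} (hmeas : ∀ t a, Measurable (B t a))
    (hval : ∀ t a ω, B t a ω = 0 ∨ B t a ω = 1)
    (hbern : ∀ t a, μ {ω | B t a ω = 1} = ENNReal.ofReal (p a)) :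
    ∀ᵐ ω ∂μ, ∀ a, (p a = 0 → ∀ t, B t a ω = 0) ∧ (p a = 1 → ∀ t, B t a ω = 1) := by
  refine ae_all_iff.2 fun a => ?_
  have hzero (ha : p a = 0) : ∀ᵐ ω ∂μ, ∀ t, B t a ω = 0 :=
    ae_forall_eq_zero_of_measure_eq_one_eq_zero (hval · a) (by simp [hbern, ha])
  have hone (ha : p a = 1) : ∀ᵐ ω ∂μ, ∀ t, B t a ω = 1 :=
    ae_forall_eq_one_of_measure_eq_one (hmeas · a) (by simp [hbern, ha])
  by_cases h0 : p a = 0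
  · filter_upwards [hzero h0] with ω hω using ⟨fun _ => hω, fun h1 => by simp [h0] at h1⟩
  by_cases h1 : p a = 1
  · filter_upwards [hone h1] with ω hω using ⟨fun h => absurd h h0, fun _ => hω⟩
  · exact ae_of_all _ fun _ => ⟨fun h => absurd h h0, fun h => absurd h h1⟩

end Probability

open scoped Classical in
theorem stmt_4_general
    {Ω : Type*} [MeasurableSpace Ω] (μ : Measure Ω) [IsProbabilityMeasure μ]
    {A : Type*} [Fintype A] [MeasurableSpace A] [MeasurableSingletonClass A]
    (p : A → ℝ) (hp0 : ∀ a, 0 ≤ p a) (hp1 : ∀ a, p a ≤ 1)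
    (astar : A) (hstar : p astar = 1)
    (B : ℕ → A → Ω → ℝ)
    (hmeas : ∀ t a, Measurable (B t a))
    (hval : ∀ t a ω, B t a ω = 0 ∨ B t a ω = 1)
    (hbern : ∀ t a, μ {ω | B t a ω = 1} = ENNReal.ofReal (p a))
    (Act : ℕ → Ω → A)
    (hActmeas : ∀ t, Measurable (Act t))
    -- FTL with an arbitrary (measurable) tie-breaking rule: the choice is a leader
    (hFTL : ∀ t ω a, (∑ s ∈ Finset.range t, B s a ω)
      ≤ ∑ s ∈ Finset.range t, B s (Act t ω) ω)
    (T : ℕ) :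
    (T : ℝ) - ∫ ω, (∑ t ∈ Finset.range T, B t (Act t ω) ω) ∂μ
      ≤ 1 + ((Finset.univ.filter (fun a : A => 0 < p a ∧ p a < 1)).card : ℝ) := by
  set S := Finset.univ.filter (fun a : A => 0 < p a ∧ p a < 1)
  have hpath : ∀ᵐ ω ∂μ, (T : ℝ) - (1 + #S) ≤ ∑ t ∈ range T, B t (Act t ω) ω := by
    filter_upwards [ae_forall_eq_of_bernoulli_zero_or_one hmeas hval hbern] with ω hω
    have hS : ∀ a ∉ S, (∀ t, B t a ω = 0) ∨ (∀ t, B t a ω = 1) := fun a ha => by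
      rcases (hp0 a).eq_or_lt with h0 | hpos
      · exact .inl ((hω a).1 h0.symm)
      rcases (hp1 a).lt_or_eq with hlt | h1
      · exact absurd (by simp [S, hpos, hlt]) ha
      · exact .inr ((hω a).2 h1)
    have := card_sub_sum_leader_le (b := fun t a => B t a ω) (fun t a => hval t a ω)
      ((hω astar).2 hstar) (fun t => hFTL t ω astar) S hS T
    linarith
  have hint : Integrable (fun ω => ∑ t ∈ range T, B t (Act t ω) ω) μ :=
    integrable_finsetSum _ fun t _ =>
      .of_bound ((Measurable.eval_of_countable (hmeas t) (hActmeas t)).aestronglyMeasurable) 1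
        (ae_of_all _ fun ω => by rcases hval t (Act t ω) ω with h | h <;> simp [h])
  have := integral_mono_ae (integrable_const _) hint hpath
  simp only [integral_const, probReal_univ, one_smul] at this
  linarith

/-- Full-information Bernoulli experts with an action `astar` having
`p astar = 1`.  The regret of FTL (with an arbitrary tie-breaking rule) over any
horizon `T` is at most `1 + #{a : p a ∈ (0,1)}`, uniformly in `T`.  Since
`max_a p a = 1`, the regret is `T − E[Σ_{t<T} B t (Act t)]`. -/
theorem stmt_4
    {Ω : Type*} [MeasurableSpace Ω] (μ : Measure Ω) [IsProbabilityMeasure μ]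
    {A : Type*} [Fintype A] [Nonempty A] [MeasurableSpace A] [MeasurableSingletonClass A]
    (p : A → ℝ) (hp0 : ∀ a, 0 ≤ p a) (hp1 : ∀ a, p a ≤ 1)
    (astar : A) (hstar : p astar = 1)
    (B : ℕ → A → Ω → ℝ)
    (hmeas : ∀ t a, Measurable (B t a))
    (hval : ∀ t a ω, B t a ω = 0 ∨ B t a ω = 1)
    (hbern : ∀ t a, μ {ω | B t a ω = 1} = ENNReal.ofReal (p a))
    (hindep : iIndepFun
      (fun (ta : ℕ × A) => B ta.1 ta.2) μ)
    (Act : ℕ → Ω → A)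
    (hActmeas : ∀ t, Measurable (Act t))
    -- FTL with an arbitrary (measurable) tie-breaking rule: the choice is a leader
    (hFTL : ∀ t ω a, (∑ s ∈ Finset.range t, B s a ω)
      ≤ ∑ s ∈ Finset.range t, B s (Act t ω) ω)
    (T : ℕ) :
    (T : ℝ) - ∫ ω, (∑ t ∈ Finset.range T, B t (Act t ω) ω) ∂μ
      ≤ 1 + ((Finset.univ.filter (fun a : A => 0 < p a ∧ p a < 1)).card : ℝ) :=
  stmt_4_general μ p hp0 hp1 astar hstar B hmeas hval hbern Act hActmeas hFTL T
end

section
/- Suppose a finite action set A contains a* with p_{a*} = 1, and let S = {a : p_a ∈ (0,1)}, Z = {a : p_a = 0}. Define for each a ∈ S its first-failure time τ_a = min{t : B_t(a) = 0}. Then almost surely the set of rounds t ≥ 2 at which FTL's selected action A_t yields B_t(A_t) = 0 is contained in {τ_a : a ∈ S}, and hence has cardinality at most |S|. -/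
open MeasureTheory ProbabilityTheory

/-! Almost surely the perfect action `astar` earns `t` in the first `t` rounds, so an FTL
leader at round `t` must also have earned `t`, i.e. never failed before `t`. Hence if it fails
at round `t`, then `t` is its first-failure time. A leader with `p = 1` never fails, and for
`t ≥ 1` it succeeded at round `0`, which rules out `p = 0`; so the failing leader lies in `S`.
Each action has a single first-failure time, which bounds the number of such rounds by `|S|`. -/

section Bernoulli

variable {Ω A : Type*} [MeasurableSpace Ω] {μ : Measure Ω} {p : A → ℝ}
  {B : ℕ → A → Ω → ℝ}

theorem ae_forall_eq_one_of_prob_eq_one [IsProbabilityMeasure μ] [Countable A]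
    (hmeas : ∀ t a, Measurable (B t a))
    (hbern : ∀ t a, μ {ω | B t a ω = 1} = ENNReal.ofReal (p a)) :
    ∀ᵐ ω ∂μ, ∀ t a, p a = 1 → B t a ω = 1 := by
  refine ae_all_iff.2 fun t => ae_all_iff.2 fun a => ?_
  by_cases hpa : p a = 1
  · have hsure : ∀ᵐ ω ∂μ, B t a ω = 1 :=
      (ae_iff_measure_eq (p := fun ω => B t a ω = 1)
        (hmeas t a (measurableSet_singleton 1)).nullMeasurableSet).2
        (by rw [hbern, hpa, measure_univ, ENNReal.ofReal_one])
    filter_upwards [hsure] with ω hω using fun _ => hω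
  · exact .of_forall fun _ h => absurd h hpa

theorem ae_forall_eq_zero_of_prob_eq_zero [Countable A]
    (hval : ∀ t a ω, B t a ω = 0 ∨ B t a ω = 1)
    (hbern : ∀ t a, μ {ω | B t a ω = 1} = ENNReal.ofReal (p a)) :
    ∀ᵐ ω ∂μ, ∀ t a, p a = 0 → B t a ω = 0 := by
  refine ae_all_iff.2 fun t => ae_all_iff.2 fun a => ?_
  by_cases hpa : p a = 0
  · have hnever : ∀ᵐ ω ∂μ, ω ∉ {ω | B t a ω = 1} :=
      measure_eq_zero_iff_ae_notMem.1 (by rw [hbern, hpa, ENNReal.ofReal_zero])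
    filter_upwards [hnever] with ω hω using fun _ => (hval t a ω).resolve_right hω
  · exact .of_forall fun _ h => absurd h hpa

end Bernoulli

theorem eq_one_of_le_sum_range {f : ℕ → ℝ} {t s : ℕ} (hf : ∀ s, f s ≤ 1)
    (hsum : (t : ℝ) ≤ ∑ s ∈ Finset.range t, f s) (hs : s < t) : f s = 1 := by
  have hle : ∑ s ∈ Finset.range t, f s ≤ ∑ _s ∈ Finset.range t, (1 : ℝ) :=
    Finset.sum_le_sum fun s _ => hf s
  refine (Finset.sum_eq_sum_iff_of_le fun s _ => hf s).1 ?_ s (Finset.mem_range.2 hs)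
  exact le_antisymm hle (by simpa using hsum)

theorem eq_one_of_lt_of_sum_le_of_perfect {A : Type*} {r : ℕ → A → ℝ} {a astar : A}
    {t s : ℕ}
    (hr : ∀ s, r s a ≤ 1) (hstar : ∀ s, r s astar = 1)
    (hlead : ∑ s ∈ Finset.range t, r s astar ≤ ∑ s ∈ Finset.range t, r s a) (hs : s < t) :
    r s a = 1 :=
  eq_one_of_le_sum_range hr (by simpa [hstar] using hlead) hs

theorem sInf_setOf_eq_zero_eq {f : ℕ → ℝ} {t : ℕ} (hbefore : ∀ s < t, f s = 1)
    (ht : f t = 0) :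
    sInf {s | f s = 0} = t :=
  IsLeast.csInf_eq ⟨ht, fun s hs => not_lt.1 fun h => by simp [hbefore s h] at hs⟩

-- Rounds are 0-indexed: round `t ≥ 2` of the paper is `t ≥ 1` here.
theorem stmt_8_general
    {Ω : Type*} [MeasurableSpace Ω] (μ : Measure Ω) [IsProbabilityMeasure μ]
    {A : Type*} [Fintype A]
    (p : A → ℝ) (hp0 : ∀ a, 0 ≤ p a) (hp1 : ∀ a, p a ≤ 1)
    (astar : A) (hstar : p astar = 1)
    (B : ℕ → A → Ω → ℝ)
    (hmeas : ∀ t a, Measurable (B t a))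
    (hval : ∀ t a ω, B t a ω = 0 ∨ B t a ω = 1)
    (hbern : ∀ t a, μ {ω | B t a ω = 1} = ENNReal.ofReal (p a))
    (Act : ℕ → Ω → A)
    -- FTL with an arbitrary tie-breaking rule: the selected action is a leader
    (hFTL : ∀ t ω a, (∑ s ∈ Finset.range t, B s a ω)
      ≤ ∑ s ∈ Finset.range t, B s (Act t ω) ω) :
    ∀ᵐ ω ∂μ,
      ({t : ℕ | 1 ≤ t ∧ B t (Act t ω) ω = 0}
          ⊆ (fun a => sInf {t : ℕ | B t a ω = 0}) '' {a : A | 0 < p a ∧ p a < 1})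
        ∧ ({t : ℕ | 1 ≤ t ∧ B t (Act t ω) ω = 0}).ncard
            ≤ (Finset.univ.filter (fun a : A => 0 < p a ∧ p a < 1)).card := by
  filter_upwards [ae_forall_eq_one_of_prob_eq_one hmeas hbern,
    ae_forall_eq_zero_of_prob_eq_zero hval hbern] with ω hone hzero
  have hsub : {t : ℕ | 1 ≤ t ∧ B t (Act t ω) ω = 0}
      ⊆ (fun a => sInf {t : ℕ | B t a ω = 0}) '' {a : A | 0 < p a ∧ p a < 1} := by
    rintro t ⟨ht1, hfail⟩
    have hbefore : ∀ s < t, B s (Act t ω) ω = 1 := fun s hs =>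
      eq_one_of_lt_of_sum_le_of_perfect (r := fun s a => B s a ω)
        (fun s => (hval s _ ω).elim (·.le.trans zero_le_one) (·.le))
        (fun s => hone s astar hstar) (hFTL t ω astar) hs
    refine ⟨Act t ω, ⟨(hp0 _).lt_of_ne fun h => ?_, (hp1 _).lt_of_ne fun h => ?_⟩,
      sInf_setOf_eq_zero_eq hbefore hfail⟩
    · simpa [hzero 0 _ h.symm] using hbefore 0 ht1
    · simp [hone t _ h] at hfail
  refine ⟨hsub, (Set.ncard_le_ncard hsub (Set.toFinite _)).trans ?_⟩
  rw [← Finset.coe_filter_univ, ← Set.ncard_coe_finset]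
  exact Set.ncard_image_le

/-- Full-information Bernoulli experts with `p astar = 1` (rounds
0-indexed: "round `t ≥ 2`" of the paper is `t ≥ 1` here).  Let
`S = {a | p a ∈ (0,1)}` and, for each `ω`, let `τ a ω = sInf {t | B t a ω = 0}` be
the first-failure time of `a`.  Then almost surely the set of rounds `t ≥ 1` at
which FTL's selected action fails is contained in `{τ a : a ∈ S}`, and hence has at
most `|S|` elements. -/
theorem stmt_8
    {Ω : Type*} [MeasurableSpace Ω] (μ : Measure Ω) [IsProbabilityMeasure μ]
    {A : Type*} [Fintype A] [Nonempty A]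
    (p : A → ℝ) (hp0 : ∀ a, 0 ≤ p a) (hp1 : ∀ a, p a ≤ 1)
    (astar : A) (hstar : p astar = 1)
    (B : ℕ → A → Ω → ℝ)
    (hmeas : ∀ t a, Measurable (B t a))
    (hval : ∀ t a ω, B t a ω = 0 ∨ B t a ω = 1)
    (hbern : ∀ t a, μ {ω | B t a ω = 1} = ENNReal.ofReal (p a))
    (hindep : iIndepFun
      (fun (ta : ℕ × A) => B ta.1 ta.2) μ)
    (Act : ℕ → Ω → A)
    -- FTL with an arbitrary tie-breaking rule: the selected action is a leader
    (hFTL : ∀ t ω a, (∑ s ∈ Finset.range t, B s a ω)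
      ≤ ∑ s ∈ Finset.range t, B s (Act t ω) ω) :
    ∀ᵐ ω ∂μ,
      ({t : ℕ | 1 ≤ t ∧ B t (Act t ω) ω = 0}
          ⊆ (fun a => sInf {t : ℕ | B t a ω = 0}) '' {a : A | 0 < p a ∧ p a < 1})
        ∧ ({t : ℕ | 1 ≤ t ∧ B t (Act t ω) ω = 0}).ncard
            ≤ (Finset.univ.filter (fun a : A => 0 < p a ∧ p a < 1)).card :=
  stmt_8_general μ p hp0 hp1 astar hstar B hmeas hval hbern Act hFTL
end

section
/- In the full-information Bernoulli experts problem with a unique optimal action a* such that p_{a*} > p_b for all b ≠ a*, the regret of FTL is bounded uniformly in T: R_T(FTL) ≤ 1 + Σ_{b ≠ a*} Σ_{t=1}^∞ exp(−t·(p_{a*} − p_b)²/2) < ∞. -/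
open MeasureTheory ProbabilityTheory
open scoped Classical

/-!
FTL can only miss the optimal arm `a*` at round `t` if some `b ≠ a*` has collected at least
as much reward as `a*` during the first `t` rounds. Hoeffding's inequality for the `2t`
independent rewards of `b` and `a*` bounds the probability of this by `exp (-t Δ_b²)`,
with `Δ_b = p a* - p b`. The regret is at most the expected number of rounds in which FTL misses
`a*`, hence at most `1` (round `0`) plus, for each `b ≠ a*`, a convergent geometric series.
-/

open Finset

theorem measureReal_sum_le_sum_le_exp {Ω ι : Type*} [MeasurableSpace Ω] {μ : Measure Ω}
    [IsProbabilityMeasure μ] {X : ι → Ω → ℝ} (hindep : iIndepFun X μ)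
    (hmeas : ∀ i, AEMeasurable (X i) μ) (hX : ∀ i, ∀ᵐ ω ∂μ, X i ω ∈ Set.Icc (0 : ℝ) 1)
    {s u : Finset ι} (hsu : Disjoint s u) (hle : ∑ i ∈ s, μ[X i] ≤ ∑ i ∈ u, μ[X i]) :
    μ.real {ω | ∑ i ∈ u, X i ω ≤ ∑ i ∈ s, X i ω}
      ≤ Real.exp (-2 * (∑ i ∈ u, μ[X i] - ∑ i ∈ s, μ[X i]) ^ 2 / (#s + #u)) := by
  -- Flipping the sign on `u` reduces the comparison to one Hoeffding tail bound: every signed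
  -- variable ranges over an interval of length `1`, so it is `1/4`-sub-Gaussian once centered.
  set Y : ι → Ω → ℝ := fun i ω ↦ if i ∈ s then X i ω else -X i ω with hY
  have hY_indep : iIndepFun (fun i ω ↦ Y i ω - μ[Y i]) μ := by
    have := hindep.comp (fun i (x : ℝ) ↦ (if i ∈ s then x else -x) - μ[Y i])
      fun i ↦ by split_ifs <;> fun_prop
    exact this
  have hY_subG : ∀ i ∈ s ∪ u, HasSubgaussianMGF (fun ω ↦ Y i ω - μ[Y i]) (1 / 4) μ := by
    intro i _
    by_cases hi : i ∈ s
    · simp only [hY, if_pos hi]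
      convert hasSubgaussianMGF_of_mem_Icc (hmeas i) (hX i) using 1
      norm_num
    · simp only [hY, if_neg hi]
      convert hasSubgaussianMGF_of_mem_Icc (hmeas i).neg (a := -1) (b := 0)
        (by filter_upwards [hX i] with ω ⟨h0, h1⟩ using ⟨neg_le_neg h1, neg_nonpos.2 h0⟩) using 1
      · rfl
      · rw [sub_neg_eq_add, zero_add, nnnorm_one]
        norm_num
  have hsum : ∀ ω, ∑ i ∈ s ∪ u, (Y i ω - μ[Y i])
      = ∑ i ∈ s, X i ω - ∑ i ∈ u, X i ω + (∑ i ∈ u, μ[X i] - ∑ i ∈ s, μ[X i]) := by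
    intro ω
    have hu : ∀ i ∈ u, i ∉ s := fun i hi his ↦ disjoint_left.1 hsu his hi
    rw [sum_union hsu,
      sum_congr rfl fun i hi ↦ show Y i ω - μ[Y i] = X i ω - μ[X i] by simp only [hY, if_pos hi],
      sum_congr rfl fun i hi ↦ show Y i ω - μ[Y i] = -(X i ω - μ[X i]) by
        simp only [hY, if_neg (hu i hi), integral_neg]; ring]
    simp only [sum_sub_distrib, sum_neg_distrib]
    ring
  calc μ.real {ω | ∑ i ∈ u, X i ω ≤ ∑ i ∈ s, X i ω}
      ≤ μ.real {ω | ∑ i ∈ u, μ[X i] - ∑ i ∈ s, μ[X i] ≤ ∑ i ∈ s ∪ u, (Y i ω - μ[Y i])} :=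
        measureReal_mono fun ω hω ↦ by simp only [Set.mem_ofPred_eq, hsum] at hω ⊢; linarith
    _ ≤ _ := HasSubgaussianMGF.measure_sum_ge_le_of_iIndepFun hY_indep hY_subG (sub_nonneg.2 hle)
    _ = _ := by
      rw [sum_const, card_union_of_disjoint hsu]
      push_cast [nsmul_eq_mul]
      rw [show (2 : ℝ) * ((#s + #u) * (1 / 4)) = (#s + #u) / 2 by ring, div_div_eq_mul_div]
      ring_nf

lemma integral_eq_measureReal_of_eq_zero_or_one {Ω : Type*} [MeasurableSpace Ω]
    {μ : Measure Ω} {f : Ω → ℝ} (hf : Measurable f) (h01 : ∀ ω, f ω = 0 ∨ f ω = 1) :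
    ∫ ω, f ω ∂μ = μ.real {ω | f ω = 1} := by
  have hf_eq : f = {ω | f ω = 1}.indicator 1 := by
    funext ω
    rcases h01 ω with h | h <;> simp [h]
  conv_lhs => rw [hf_eq]
  exact integral_indicator_one (hf (measurableSet_singleton 1))

section Regret

variable {Ω A : Type*} [MeasurableSpace Ω] {μ : Measure Ω} [IsFiniteMeasure μ]

lemma measureReal_ne_le_sum_of_forall_le {S : A → Ω → ℝ} {g : Ω → A} [Fintype A]
    (hg : ∀ ω a, S a ω ≤ S (g ω) ω) (a : A) :
    μ.real {ω | g ω ≠ a} ≤ ∑ b ∈ univ.erase a, μ.real {ω | S a ω ≤ S b ω} := by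
  have hsub : {ω | g ω ≠ a} ⊆ ⋃ b ∈ univ.erase a, {ω | S a ω ≤ S b ω} := fun ω hω ↦
    Set.mem_biUnion (mem_erase.2 ⟨hω, mem_univ _⟩) (hg ω a)
  exact (measureReal_mono hsub (measure_ne_top _ _)).trans (measureReal_biUnion_finset_le _ _)

variable [MeasurableSpace A] [Countable A] [MeasurableSingletonClass A]
  {X : A → Ω → ℝ} {g : Ω → A}

lemma integrable_apply_of_mem_Icc (hX : ∀ a, Measurable (X a))
    (hX01 : ∀ a ω, X a ω ∈ Set.Icc (0 : ℝ) 1) (hg : Measurable g) :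
    Integrable (fun ω ↦ X (g ω) ω) μ :=
  .of_mem_Icc 0 1
    ((measurable_from_prod_countable_right (f := fun x : A × Ω ↦ X x.1 x.2) hX).comp
      (hg.prodMk measurable_id)).aemeasurable
    (ae_of_all _ fun ω ↦ hX01 _ ω)

lemma integral_sub_integral_apply_le_measureReal_ne (hX : ∀ a, Measurable (X a))
    (hX01 : ∀ a ω, X a ω ∈ Set.Icc (0 : ℝ) 1) (hg : Measurable g) (a : A) :
    μ[X a] - ∫ ω, X (g ω) ω ∂μ ≤ μ.real {ω | g ω ≠ a} := by
  have hne : MeasurableSet {ω | g ω ≠ a} := (hg (measurableSet_singleton a)).compl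
  have hXa : Integrable (X a) μ := .of_mem_Icc 0 1 (hX a).aemeasurable (ae_of_all _ (hX01 a))
  have hind : Integrable ({ω | g ω ≠ a}.indicator (1 : Ω → ℝ)) μ :=
    (integrable_const 1).indicator hne
  have hpoint : ∀ ω, X a ω - {ω | g ω ≠ a}.indicator 1 ω ≤ X (g ω) ω := by
    intro ω
    by_cases h : g ω = a
    · simp [h]
    · simp only [Set.indicator_of_mem (show ω ∈ {ω | g ω ≠ a} from h), Pi.one_apply]
      linarith [(hX01 a ω).2, (hX01 (g ω) ω).1]
  have := integral_mono (hXa.sub hind) (integrable_apply_of_mem_Icc hX hX01 hg) hpoint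
  rw [integral_sub' hXa hind, integral_indicator_one hne] at this
  linarith

lemma regret_le_sum_measureReal_ne {X : ℕ → A → Ω → ℝ} (hX : ∀ t a, Measurable (X t a))
    (hX01 : ∀ t a ω, X t a ω ∈ Set.Icc (0 : ℝ) 1) {g : ℕ → Ω → A} (hg : ∀ t, Measurable (g t))
    {a : A} {m : ℝ} (hmean : ∀ t, μ[X t a] = m) (T : ℕ) :
    T * m - ∫ ω, ∑ t ∈ range T, X t (g t ω) ω ∂μ ≤ ∑ t ∈ range T, μ.real {ω | g t ω ≠ a} :=
  calc T * m - ∫ ω, ∑ t ∈ range T, X t (g t ω) ω ∂μ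
      = ∑ t ∈ range T, (μ[X t a] - ∫ ω, X t (g t ω) ω ∂μ) := by
        rw [integral_finsetSum _ fun t _ ↦ integrable_apply_of_mem_Icc (hX t) (hX01 t) (hg t),
          sum_sub_distrib, sum_congr rfl fun t _ ↦ hmean t, sum_const, card_range, nsmul_eq_mul]
    _ ≤ _ := sum_le_sum fun t _ ↦
        integral_sub_integral_apply_le_measureReal_ne (hX t) (hX01 t) (hg t) a

end Regret

lemma measureReal_sum_range_le_sum_range_le_exp {Ω A : Type*} [MeasurableSpace Ω]
    {μ : Measure Ω} [IsProbabilityMeasure μ] {B : ℕ → A → Ω → ℝ}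
    (hindep : iIndepFun (fun i : ℕ × A ↦ B i.1 i.2) μ) (hmeas : ∀ s a, Measurable (B s a))
    (hB01 : ∀ s a ω, B s a ω ∈ Set.Icc (0 : ℝ) 1) {m : A → ℝ} (hmean : ∀ s a, μ[B s a] = m a)
    {a b : A} (hba : b ≠ a) (hle : m b ≤ m a) (t : ℕ) :
    μ.real {ω | ∑ s ∈ range t, B s a ω ≤ ∑ s ∈ range t, B s b ω}
      ≤ Real.exp (-t * (m a - m b) ^ 2) := by
  have hsum : ∀ c (f : ℕ × A → ℝ), ∑ i ∈ range t ×ˢ {c}, f i = ∑ s ∈ range t, f (s, c) :=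
    fun c f ↦ by rw [sum_product]; simp only [sum_singleton]
  have h := measureReal_sum_le_sum_le_exp hindep (fun i ↦ (hmeas i.1 i.2).aemeasurable)
    (fun i ↦ ae_of_all _ (hB01 i.1 i.2)) (s := range t ×ˢ {b}) (u := range t ×ˢ {a})
    (disjoint_product.2 (.inr (disjoint_singleton.2 hba)))
    (by simp only [hsum, hmean, sum_const, card_range, nsmul_eq_mul]; gcongr)
  simp only [hsum, hmean, sum_const, card_product, card_range, card_singleton, mul_one,
    nsmul_eq_mul] at h
  convert h using 2
  rcases eq_or_ne (t : ℝ) 0 with ht | ht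
  · simp [ht]
  · field_simp
    ring

lemma sum_range_le_one_add_tsum {r f : ℕ → ℝ} (h0 : r 0 ≤ 1) (hsucc : ∀ t, r (t + 1) ≤ f t)
    (hf : Summable f) (hf0 : ∀ t, 0 ≤ f t) (T : ℕ) :
    ∑ t ∈ range T, r t ≤ 1 + ∑' t, f t := by
  cases T with
  | zero => simpa using add_nonneg zero_le_one (tsum_nonneg hf0)
  | succ n =>
    rw [sum_range_succ']
    have := (sum_le_sum fun t (_ : t ∈ range n) ↦ hsucc t).trans
      (hf.sum_le_tsum _ fun t _ ↦ hf0 t)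
    linarith

theorem stmt_18_general
    {Ω : Type*} [MeasurableSpace Ω] (μ : Measure Ω) [IsProbabilityMeasure μ]
    {A : Type*} [Fintype A] [MeasurableSpace A] [MeasurableSingletonClass A]
    (p : A → ℝ) (hp0 : ∀ a, 0 ≤ p a)
    (astar : A) (hopt : ∀ b, b ≠ astar → p b < p astar)
    (B : ℕ → A → Ω → ℝ)
    (hmeas : ∀ t a, Measurable (B t a))
    (hval : ∀ t a ω, B t a ω = 0 ∨ B t a ω = 1)
    (hbern : ∀ t a, μ {ω | B t a ω = 1} = ENNReal.ofReal (p a))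
    (hindep : iIndepFun
      (fun (ta : ℕ × A) => B ta.1 ta.2) μ)
    (Act : ℕ → Ω → A)
    (hActmeas : ∀ t, Measurable (Act t))
    -- FTL with an arbitrary tie-breaking rule: the selected action is a leader
    (hFTL : ∀ t ω a, (∑ s ∈ Finset.range t, B s a ω)
      ≤ ∑ s ∈ Finset.range t, B s (Act t ω) ω)
    (T : ℕ) :
    (T : ℝ) * p astar - ∫ ω, (∑ t ∈ Finset.range T, B t (Act t ω) ω) ∂μ
      ≤ 1 + ∑ b ∈ Finset.univ.erase astar,
          ∑' t : ℕ, Real.exp (-((t : ℝ) + 1) * (p astar - p b) ^ 2 / 2) := by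
  have hB01 : ∀ t a ω, B t a ω ∈ Set.Icc (0 : ℝ) 1 := fun t a ω ↦ by
    rcases hval t a ω with h | h <;> simp [h]
  have hmean : ∀ t a, μ[B t a] = p a := fun t a ↦ by
    rw [integral_eq_measureReal_of_eq_zero_or_one (hmeas t a) (hval t a), measureReal_def,
      hbern, ENNReal.toReal_ofReal (hp0 a)]
  have hmiss : ∀ t, μ.real {ω | Act t ω ≠ astar}
      ≤ ∑ b ∈ univ.erase astar, Real.exp (-t * (p astar - p b) ^ 2 / 2) := fun t ↦
    (measureReal_ne_le_sum_of_forall_le (hFTL t) astar).trans <| sum_le_sum fun b hb ↦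
      (measureReal_sum_range_le_sum_range_le_exp hindep hmeas hB01 hmean (ne_of_mem_erase hb)
        (hopt b (ne_of_mem_erase hb)).le t).trans <|
      Real.exp_le_exp.2 (by nlinarith [mul_nonneg t.cast_nonneg (sq_nonneg (p astar - p b))])
  have hsummable : ∀ b ∈ univ.erase astar,
      Summable fun t : ℕ ↦ Real.exp (-((t : ℝ) + 1) * (p astar - p b) ^ 2 / 2) := fun b hb ↦ by
    have hgap : 0 < p astar - p b := sub_pos.2 (hopt b (ne_of_mem_erase hb))
    convert Real.summable_exp_nat_mul_of_ge (c := -(p astar - p b) ^ 2 / 2) (f := fun t ↦ t + 1)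
      (by nlinarith) (fun t ↦ by simp) using 3
    ring
  calc (T : ℝ) * p astar - ∫ ω, (∑ t ∈ range T, B t (Act t ω) ω) ∂μ
      ≤ ∑ t ∈ range T, μ.real {ω | Act t ω ≠ astar} :=
        regret_le_sum_measureReal_ne hmeas hB01 hActmeas (fun t ↦ hmean t astar) T
    _ ≤ 1 + ∑' t : ℕ, ∑ b ∈ univ.erase astar,
          Real.exp (-((t : ℝ) + 1) * (p astar - p b) ^ 2 / 2) :=
        sum_range_le_one_add_tsum measureReal_le_one (fun t ↦ by exact_mod_cast hmiss (t + 1))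
          (summable_sum hsummable) (fun t ↦ sum_nonneg fun b _ ↦ (Real.exp_pos _).le) T
    _ = _ := by rw [Summable.tsum_finsetSum hsummable]

/-- Full-information Bernoulli experts with a unique optimal action
`astar` (`p b < p astar` for all `b ≠ astar`).  The regret of FTL is bounded
uniformly in the horizon `T` by
`1 + Σ_{b ≠ astar} Σ_{t=1}^∞ exp (− t (p astar − p b)² / 2)` (the inner sum over
`t ≥ 1` is written as a `tsum` over `ℕ` with `t ↦ t + 1`). -/
theorem stmt_18
    {Ω : Type*} [MeasurableSpace Ω] (μ : Measure Ω) [IsProbabilityMeasure μ]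
    {A : Type*} [Fintype A] [Nonempty A] [MeasurableSpace A] [MeasurableSingletonClass A]
    (p : A → ℝ) (hp0 : ∀ a, 0 ≤ p a) (hp1 : ∀ a, p a ≤ 1)
    (astar : A) (hopt : ∀ b, b ≠ astar → p b < p astar)
    (B : ℕ → A → Ω → ℝ)
    (hmeas : ∀ t a, Measurable (B t a))
    (hval : ∀ t a ω, B t a ω = 0 ∨ B t a ω = 1)
    (hbern : ∀ t a, μ {ω | B t a ω = 1} = ENNReal.ofReal (p a))
    (hindep : iIndepFun
      (fun (ta : ℕ × A) => B ta.1 ta.2) μ)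
    (Act : ℕ → Ω → A)
    (hActmeas : ∀ t, Measurable (Act t))
    -- FTL with an arbitrary tie-breaking rule: the selected action is a leader
    (hFTL : ∀ t ω a, (∑ s ∈ Finset.range t, B s a ω)
      ≤ ∑ s ∈ Finset.range t, B s (Act t ω) ω)
    (T : ℕ) :
    (T : ℝ) * p astar - ∫ ω, (∑ t ∈ Finset.range T, B t (Act t ω) ω) ∂μ
      ≤ 1 + ∑ b ∈ Finset.univ.erase astar,
          ∑' t : ℕ, Real.exp (-((t : ℝ) + 1) * (p astar - p b) ^ 2 / 2) :=
  stmt_18_general μ p hp0 astar hopt B hmeas hval hbern hindep Act hActmeas hFTL T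
end
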